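/- Let X be a geodesic Peano continuum that is semi-locally simply connected, with basepoint x₀. On the set X̃ of homotopy-rel-endpoints classes of paths in X starting at x₀, define d([α],[β]) as the infimum of lengths of paths γ from α(1) to β(1) that are homotopic rel endpoints to α⁻¹ ∗ β. Then d is a metric on X̃. -/

import Mathlib

open Metric Set ENNReal NNReal

noncomputable section

/-- Arc length of a path in a pseudo-metric space, valued in `ℝ≥0∞`. -/
def pathLen {X : Type*} [PseudoMetricSpace X] {x y : X} (γ : Path x y) : ℝ≥0∞ :=
  eVariationOn γ Set.univ

/-- A metric space is geodesic if any two points are joined by a path whose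
length equals their distance. -/
def IsGeodesicSpace (X : Type*) [MetricSpace X] : Prop :=
  ∀ x y : X, ∃ γ : Path x y, pathLen γ = ENNReal.ofReal (dist x y)

/-- Semi-local simple connectedness: every point has a neighborhood `U` such
that every loop contained in `U` is null-homotopic in `X`. -/
def SemiLocallySimplyConnected (X : Type*) [TopologicalSpace X] : Prop :=
  ∀ x : X, ∃ U ∈ nhds x, ∀ γ : Path x x, Set.range γ ⊆ U → γ.Homotopic (Path.refl x)

/-- A group is finitely presented. -/
def Group.FinitelyPresented (G : Type*) [Group G] : Prop :=
  ∃ (n : ℕ) (rels : Set (FreeGroup (Fin n))), rels.Finite ∧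
    Nonempty (PresentedGroup rels ≃* G)

/-- The space of homotopy-rel-endpoints classes of paths starting at `x₀`. -/
def PathsFrom {X : Type*} [TopologicalSpace X] (x₀ : X) : Type _ :=
  Σ y : X, Path.Homotopic.Quotient x₀ y

/-- The length-infimum distance on `PathsFrom x₀`, valued in `ℝ≥0∞`:
the infimum of lengths of paths `γ` from `α(1)` to `β(1)` such that
`α ∗ γ` is homotopic rel endpoints to `β`. -/
def dTilde {X : Type*} [MetricSpace X] {x₀ : X} (a b : PathsFrom x₀) : ℝ≥0∞ :=
  ⨅ γ : {γ : Path a.1 b.1 // Path.Homotopic.Quotient.trans a.2 (Path.Homotopic.Quotient.mk γ) = b.2}, pathLen γ.1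

/-- The endpoint projection `X̃ → X`. -/
def endpointProj {X : Type*} [TopologicalSpace X] {x₀ : X} (a : PathsFrom x₀) : X := a.1

/-- The action of a class of a loop `β` at `x₀` on `PathsFrom x₀`, sending `[α]` to `[β ∗ α]`. -/
def loopAct {X : Type*} [TopologicalSpace X] {x₀ : X}
    (g : Path.Homotopic.Quotient x₀ x₀) (a : PathsFrom x₀) : PathsFrom x₀ :=
  ⟨a.1, Path.Homotopic.Quotient.trans g a.2⟩

/-- Uniform path connectedness. -/
def UniformlyPathConnected (X : Type*) [MetricSpace X] : Prop :=
  ∃ α : ℝ → ℝ, ∀ x y : X, x ≠ y →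
    ∃ γ : Path x y, Metric.diam (Set.range γ) ≤ α (dist x y)

/-- `π₁(X, x₀)` is uniformly generated: for some `R > 0` it is generated by
classes of loops of diameter at most `R`, conjugated to the basepoint by arbitrary paths. -/
def UniformlyGeneratedPi1 (X : Type*) [MetricSpace X] (x₀ : X) : Prop :=
  ∃ R : ℝ, 0 < R ∧ Subgroup.closure
    {g : FundamentalGroup X x₀ | ∃ (y : X) (p : Path x₀ y) (γ : Path y y),
      Metric.diam (Set.range γ) ≤ R ∧
      g = FundamentalGroup.fromPath (X := TopCat.of X) ⟦(p.trans γ).trans p.symm⟧} = ⊤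

/-- A list of points of `X` is an `r`-chain: consecutive points are at distance at most `r`. -/
def IsChain' {X : Type*} [MetricSpace X] (r : ℝ) : List X → Prop :=
  List.Chain' (fun x y => dist x y ≤ r)

/-- An elementary move at scale `R` between based chains: insertion of one interior
point, with both chains being `R`-chains. -/
def ChainMove {X : Type*} [MetricSpace X] (R : ℝ) (l₁ l₂ : List X) : Prop :=
  ∃ (p q : List X) (x : X), p ≠ [] ∧ q ≠ [] ∧
    l₁ = p ++ q ∧ l₂ = p ++ x :: q ∧ IsChain' R l₁ ∧ IsChain' R l₂

/-- A based `r`-loop is `R`-null-homotopic: it can be reduced to the trivial loop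
by elementary moves at scale `R`. -/
def ChainNull {X : Type*} [MetricSpace X] (R : ℝ) (x₀ : X) (l : List X) : Prop :=
  Relation.ReflTransGen (fun a b => ChainMove R a b ∨ ChainMove R b a) l [x₀, x₀]

/-- Coarse 1-connectedness of a metric space, via chains (edge-paths in Rips
complexes): `X` is `t`-chain connected for some `t > 0`, and every `r`-loop can
be filled at some uniformly larger scale `R`. -/
def CoarselySimplyConnected (X : Type*) [MetricSpace X] : Prop :=
  (∃ t : ℝ, 0 < t ∧ ∀ x y : X, ∃ l : List X, IsChain' t l ∧
      l.head? = some x ∧ l.getLast? = some y) ∧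
  ∀ r : ℝ, 0 < r → ∃ R : ℝ, r ≤ R ∧ ∀ (x₀ : X) (l : List X),
    IsChain' r l → l.head? = some x₀ → l.getLast? = some x₀ → ChainNull R x₀ l

end

/-! By semi-local simple connectivity and geodesics, every point has a neighbourhood in which
all loops (based anywhere) are null-homotopic, so by compactness there is `ε > 0` such that every
loop lying in an `ε`-ball is null-homotopic. Consequently every path is homotopic rel endpoints
to one of finite length: the relation "the subpath of `α` from `s` to `t` has a finite-length
representative" is transitive and holds for nearby `s, t` (replace a short subpath by a geodesic),
so it holds for `0, 1` since `[0, 1]` is connected; this makes `d` finite. A path of length `< ε`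
between equal endpoints is a loop in an `ε`-ball, hence `d([α], [β]) = 0` forces `[α] = [β]`.
Symmetry and the triangle inequality come from reversing and concatenating paths. -/

open unitInterval Topology

section PathLength

variable {X : Type*} [PseudoMetricSpace X] {x y z : X}

lemma pathLen_eq_eVariationOn_extend (γ : Path x y) :
    pathLen γ = eVariationOn γ.extend (Icc 0 1) := by
  have : (γ.extend ∘ Subtype.val : I → X) = γ := funext γ.extend_extends'
  rw [pathLen, ← this, eVariationOn.comp_eq_of_monotoneOn _ _ ((Subtype.mono_coe _).monotoneOn _),
    image_univ, Subtype.range_coe]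

lemma pathLen_refl (x : X) : pathLen (Path.refl x) = 0 :=
  eVariationOn.constant_on (by simp)

lemma edist_le_pathLen (γ : Path x y) (s t : I) : edist (γ s) (γ t) ≤ pathLen γ :=
  eVariationOn.edist_le γ (mem_univ s) (mem_univ t)

lemma edist_source_le_pathLen (γ : Path x y) (t : I) : edist x (γ t) ≤ pathLen γ := by
  simpa using edist_le_pathLen γ 0 t

lemma range_subset_eball_of_pathLen_lt {r : ℝ≥0∞} (γ : Path x y) (h : pathLen γ < r) :
    range γ ⊆ eball x r := by
  rintro _ ⟨t, rfl⟩
  exact mem_eball'.mpr ((edist_source_le_pathLen γ t).trans_lt h)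

lemma edist_endpoints_le_pathLen (γ : Path x y) : edist x y ≤ pathLen γ := by
  simpa using edist_le_pathLen γ 0 1

lemma pathLen_symm (γ : Path x y) : pathLen γ.symm = pathLen γ := by
  change eVariationOn (γ ∘ σ) univ = _
  rw [eVariationOn.comp_eq_of_antitoneOn _ _
    (fun _ _ _ _ h => unitInterval.symm_le_symm.mpr h), image_univ,
    unitInterval.symm_involutive.surjective.range_eq, pathLen]

lemma pathLen_trans (γ₁ : Path x y) (γ₂ : Path y z) :
    pathLen (γ₁.trans γ₂) = pathLen γ₁ + pathLen γ₂ := by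
  have h₁ : eVariationOn (γ₁.trans γ₂).extend (univ ∩ Icc 0 (1 / 2)) = pathLen γ₁ := by
    rw [univ_inter, eVariationOn.eq_of_eqOn (f' := γ₁.extend ∘ (2 * ·))
      fun t ht => Path.extend_trans_of_le_half _ _ ht.2,
      eVariationOn.comp_eq_of_monotoneOn _ _ (fun _ _ _ _ h => by linarith),
      pathLen_eq_eVariationOn_extend, image_mul_left_Icc two_pos.le (by norm_num)]
    norm_num
  have h₂ : eVariationOn (γ₁.trans γ₂).extend (univ ∩ Icc (1 / 2) 1) = pathLen γ₂ := by
    rw [univ_inter, eVariationOn.eq_of_eqOn (f' := γ₂.extend ∘ (2 * · + -1))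
      fun t ht => (Path.extend_trans_of_half_le _ _ ht.1).trans (by simp [sub_eq_add_neg]),
      eVariationOn.comp_eq_of_monotoneOn _ _ (fun _ _ _ _ h => by linarith),
      pathLen_eq_eVariationOn_extend, image_affine_Icc' two_pos]
    norm_num
  rw [pathLen_eq_eVariationOn_extend, ← h₁, ← h₂, eVariationOn.Icc_add_Icc _ (by norm_num)
    (by norm_num) (mem_univ _), univ_inter]

end PathLength

namespace Path.Homotopic

variable {X : Type*} [TopologicalSpace X] {x y : X}

lemma of_trans_symm_homotopic_refl {p q : Path x y}
    (h : (p.trans q.symm).Homotopic (Path.refl x)) : p.Homotopic q := by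
  rw [← Quotient.eq, Quotient.mk_trans, Quotient.mk_symm, Quotient.mk_refl] at h
  rw [← Quotient.eq]
  calc Quotient.mk p
      = ((Quotient.mk p).trans (Quotient.mk q).symm).trans (Quotient.mk q) := by simp
    _ = Quotient.mk q := by simp [h]

lemma refl_of_conj_homotopic_refl {p : Path x y} {γ : Path y y}
    (h : ((p.trans γ).trans p.symm).Homotopic (Path.refl x)) : γ.Homotopic (Path.refl y) := by
  rw [← Quotient.eq, Quotient.mk_trans, Quotient.mk_trans, Quotient.mk_symm,
    Quotient.mk_refl] at h
  rw [← Quotient.eq, Quotient.mk_refl]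
  calc Quotient.mk γ
      = ((Quotient.mk p).symm.trans
          (((Quotient.mk p).trans (Quotient.mk γ)).trans (Quotient.mk p).symm)).trans
          (Quotient.mk p) := by grind
    _ = Quotient.refl y := by simp [h]

end Path.Homotopic

def LoopsNullhomotopicInEBalls (X : Type*) [MetricSpace X] (ε : ℝ≥0∞) : Prop :=
  ∀ (z y : X) (γ : Path y y), range γ ⊆ eball z ε → γ.Homotopic (Path.refl y)

section Geodesic

variable {X : Type*} [MetricSpace X]

lemma IsGeodesicSpace.exists_pathLen_eq (hg : IsGeodesicSpace X) (x y : X) :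
    ∃ γ : Path x y, pathLen γ = edist x y := by
  simpa only [edist_dist] using hg x y

lemma SemiLocallySimplyConnected.exists_nhds_loop_homotopic_refl
    (hs : SemiLocallySimplyConnected X) (hg : IsGeodesicSpace X) (x : X) :
    ∃ V ∈ 𝓝 x, ∀ (y : X) (γ : Path y y), range γ ⊆ V → γ.Homotopic (Path.refl y) := by
  obtain ⟨U, hU, hloop⟩ := hs x
  obtain ⟨r, hr, hrU⟩ := EMetric.mem_nhds_iff.mp hU
  refine ⟨eball x r, eball_mem_nhds x hr, fun y γ hγ => ?_⟩
  obtain ⟨p, hp⟩ := hg.exists_pathLen_eq x y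
  have hpr : range p ⊆ eball x r :=
    range_subset_eball_of_pathLen_lt p (hp.trans_lt (mem_eball'.mp (hγ ⟨0, γ.source⟩)))
  refine Path.Homotopic.refl_of_conj_homotopic_refl (p := p) (hloop _ ?_)
  simp only [Path.trans_range, Path.symm_range]
  exact hrU.trans' (union_subset (union_subset hpr hγ) hpr)

lemma exists_pos_loopsNullhomotopicInEBalls [CompactSpace X] (hg : IsGeodesicSpace X)
    (hs : SemiLocallySimplyConnected X) : ∃ ε > 0, LoopsNullhomotopicInEBalls X ε := by
  choose V hV hloop using SemiLocallySimplyConnected.exists_nhds_loop_homotopic_refl hs hg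
  obtain ⟨ε, hε, hball⟩ := lebesgue_number_lemma_of_emetric_nhds isCompact_univ
    (fun x _ => hV x)
  refine ⟨ε, hε, fun z y γ hγ => ?_⟩
  obtain ⟨x, hx⟩ := hball z (mem_univ z)
  exact hloop x y γ (hγ.trans hx)

end Geodesic

lemma unitInterval.dist_left_le_of_mem_uIcc {t s u : I} (h : u ∈ uIcc t s) :
    dist t u ≤ dist t s := by
  simp only [Subtype.dist_eq]
  exact Real.dist_left_le_of_mem_uIcc (by simpa [mem_uIcc] using h)

lemma Path.eventually_range_subpath_subset_eball {X : Type*} [PseudoMetricSpace X] {x y : X}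
    (α : Path x y) (t : I) {ε : ℝ≥0∞} (hε : 0 < ε) :
    ∀ᶠ s in 𝓝 t, range (α.subpath t s) ⊆ eball (α t) ε := by
  obtain ⟨r, hr, hball⟩ := Metric.mem_nhds_iff.mp
    (α.continuous.continuousAt.preimage_mem_nhds (eball_mem_nhds (α t) hε))
  filter_upwards [Metric.ball_mem_nhds t hr] with s hs
  rw [range_subpath]
  rintro _ ⟨u, hu, rfl⟩
  refine hball ?_
  rw [Metric.mem_ball, dist_comm] at hs ⊢
  exact (unitInterval.dist_left_le_of_mem_uIcc hu).trans_lt hs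

namespace Path

variable {X : Type*} [MetricSpace X] {x y z : X}

def HasFiniteLengthRep (α : Path x y) : Prop :=
  ∃ γ : Path x y, γ.Homotopic α ∧ pathLen γ ≠ ⊤

lemma HasFiniteLengthRep.of_homotopic {α β : Path x y} (h : α.HasFiniteLengthRep)
    (hαβ : α.Homotopic β) : β.HasFiniteLengthRep :=
  let ⟨γ, hγ, hlen⟩ := h
  ⟨γ, hγ.trans hαβ, hlen⟩

lemma HasFiniteLengthRep.symm {α : Path x y} (h : α.HasFiniteLengthRep) :
    α.symm.HasFiniteLengthRep :=
  let ⟨γ, hγ, hlen⟩ := h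
  ⟨γ.symm, hγ.symm₂, by rwa [pathLen_symm]⟩

lemma HasFiniteLengthRep.trans {α : Path x y} {β : Path y z} (hα : α.HasFiniteLengthRep)
    (hβ : β.HasFiniteLengthRep) : (α.trans β).HasFiniteLengthRep :=
  let ⟨γ, hγ, hlen⟩ := hα
  let ⟨δ, hδ, hlen'⟩ := hβ
  ⟨γ.trans δ, hγ.hcomp hδ, by
    rw [pathLen_trans]
    exact ENNReal.add_ne_top.mpr ⟨hlen, hlen'⟩⟩

lemma hasFiniteLengthRep_of_range_subset_eball (hg : IsGeodesicSpace X) {ε : ℝ≥0∞}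
    (hε : LoopsNullhomotopicInEBalls X ε) {α : Path x y} (hα : range α ⊆ eball x ε) :
    α.HasFiniteLengthRep := by
  obtain ⟨g, hglen⟩ := hg.exists_pathLen_eq x y
  have hgr : range g ⊆ eball x ε :=
    range_subset_eball_of_pathLen_lt g (hglen.trans_lt (mem_eball'.mp (hα ⟨1, α.target⟩)))
  refine ⟨g, Homotopic.of_trans_symm_homotopic_refl (hε x x _ ?_), hglen ▸ edist_ne_top x y⟩
  simpa only [trans_range, symm_range] using union_subset hgr hα

lemma hasFiniteLengthRep (hg : IsGeodesicSpace X) {ε : ℝ≥0∞} (hε₀ : 0 < ε)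
    (hε : LoopsNullhomotopicInEBalls X ε) (α : Path x y) : α.HasFiniteLengthRep := by
  have hsubpath : ∀ s t, (α.subpath s t).HasFiniteLengthRep := by
    refine PreconnectedSpace.induction₂' _ (fun t => ?_) ⟨fun s t u hst htu =>
      (hst.trans htu).of_homotopic ⟨Homotopy.subpathTransSubpath α s t u⟩⟩
    filter_upwards [α.eventually_range_subpath_subset_eball t hε₀] with s hs
    have hts := hasFiniteLengthRep_of_range_subset_eball hg hε hs
    exact ⟨hts, by simpa using hts.symm⟩
  obtain ⟨γ, hγ, hlen⟩ := hsubpath 0 1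
  refine ⟨γ.cast α.source.symm α.target.symm, ?_, hlen⟩
  convert hγ.pathCast α.source.symm α.target.symm
  ext t
  simp

end Path

section LengthMetric

variable {X : Type*} [MetricSpace X] {x₀ : X}

lemma dTilde_le {a b : PathsFrom x₀} (γ : Path a.1 b.1)
    (h : a.2.trans (Path.Homotopic.Quotient.mk γ) = b.2) : dTilde a b ≤ pathLen γ :=
  iInf_le_of_le ⟨γ, h⟩ le_rfl

lemma dTilde_self (a : PathsFrom x₀) : dTilde a a = 0 :=
  nonpos_iff_eq_zero.mp <| (dTilde_le (Path.refl a.1)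
    (by simp [Path.Homotopic.Quotient.mk_refl])).trans_eq (pathLen_refl a.1)

lemma dTilde_comm (a b : PathsFrom x₀) : dTilde a b = dTilde b a := by
  suffices h : ∀ a b : PathsFrom x₀, dTilde b a ≤ dTilde a b from le_antisymm (h b a) (h a b)
  refine fun a b => le_iInf fun ⟨γ, hγ⟩ => (dTilde_le γ.symm ?_).trans_eq (pathLen_symm γ)
  rw [← hγ, Path.Homotopic.Quotient.mk_symm]
  simp

lemma dTilde_triangle (a b c : PathsFrom x₀) : dTilde a c ≤ dTilde a b + dTilde b c := by
  simp only [dTilde, ENNReal.iInf_add, ENNReal.add_iInf]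
  refine le_iInf₂ fun ⟨γ₂, hγ₂⟩ ⟨γ₁, hγ₁⟩ =>
    (dTilde_le (γ₁.trans γ₂) ?_).trans_eq (pathLen_trans γ₁ γ₂)
  rw [Path.Homotopic.Quotient.mk_trans, ← Path.Homotopic.Quotient.trans_assoc, hγ₁, hγ₂]

lemma edist_le_dTilde (a b : PathsFrom x₀) : edist a.1 b.1 ≤ dTilde a b :=
  le_iInf fun γ => edist_endpoints_le_pathLen γ.1

lemma dTilde_ne_top (hg : IsGeodesicSpace X) {ε : ℝ≥0∞} (hε₀ : 0 < ε)
    (hε : LoopsNullhomotopicInEBalls X ε) (a b : PathsFrom x₀) : dTilde a b ≠ ⊤ := by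
  obtain ⟨α, hα⟩ := Path.Homotopic.Quotient.mk_surjective (a.2.symm.trans b.2)
  obtain ⟨γ, hγα, hlen⟩ := α.hasFiniteLengthRep hg hε₀ hε
  refine ne_top_of_le_ne_top hlen (dTilde_le γ ?_)
  rw [Path.Homotopic.Quotient.eq.mpr hγα, hα, ← Path.Homotopic.Quotient.trans_assoc]
  simp

lemma eq_of_dTilde_eq_zero {ε : ℝ≥0∞} (hε₀ : 0 < ε)
    (hε : LoopsNullhomotopicInEBalls X ε)
    {a b : PathsFrom x₀} (h : dTilde a b = 0) : a = b := by
  obtain ⟨y, A⟩ := a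
  obtain ⟨y', B⟩ := b
  obtain rfl : y = y' := edist_eq_zero.mp (nonpos_iff_eq_zero.mp (h ▸ edist_le_dTilde _ _))
  obtain ⟨⟨γ, hγ⟩, hlen⟩ := iInf_lt_iff.mp (h ▸ hε₀ : dTilde _ _ < ε)
  have hnull := hε y y γ (range_subset_eball_of_pathLen_lt γ hlen)
  rw [← Path.Homotopic.Quotient.eq, Path.Homotopic.Quotient.mk_refl] at hnull
  simp only [hnull, Path.Homotopic.Quotient.trans_refl] at hγ
  rw [hγ]

end LengthMetric

theorem stmt4_general {X : Type*} [MetricSpace X] [CompactSpace X]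
    (hg : IsGeodesicSpace X)
    (hs : SemiLocallySimplyConnected X) (x₀ : X) :
    (∀ a b : PathsFrom x₀, dTilde a b ≠ ⊤) ∧
    (∀ a b : PathsFrom x₀, dTilde a b = 0 ↔ a = b) ∧
    (∀ a b : PathsFrom x₀, dTilde a b = dTilde b a) ∧
    (∀ a b c : PathsFrom x₀, dTilde a c ≤ dTilde a b + dTilde b c) := by
  obtain ⟨ε, hε₀, hε⟩ := exists_pos_loopsNullhomotopicInEBalls hg hs
  refine ⟨dTilde_ne_top hg hε₀ hε, fun a b => ⟨eq_of_dTilde_eq_zero hε₀ hε, ?_⟩, dTilde_comm,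
    dTilde_triangle⟩
  rintro rfl
  exact dTilde_self a

/-- the length-infimum distance on the space of homotopy classes
of paths from `x₀` is a metric. -/
theorem stmt4 {X : Type*} [MetricSpace X] [CompactSpace X] [ConnectedSpace X]
    [LocallyConnectedSpace X] (hg : IsGeodesicSpace X)
    (hs : SemiLocallySimplyConnected X) (x₀ : X) :
    (∀ a b : PathsFrom x₀, dTilde a b ≠ ⊤) ∧
    (∀ a b : PathsFrom x₀, dTilde a b = 0 ↔ a = b) ∧
    (∀ a b : PathsFrom x₀, dTilde a b = dTilde b a) ∧
    (∀ a b c : PathsFrom x₀, dTilde a c ≤ dTilde a b + dTilde b c) :=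
  stmt4_general hg hs x₀
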